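/- Let A : ℝ^d → ℝ be convex differentiable with minimizer x^{k,*}, and consider one step of the Tensor Extragradient Method: given x^t, let x^{t+1/2} minimize Φ^p_A(x; x^t) + (pM/(p+1)!)‖x − x^t‖^{p+1} (with M ≥ L_p, where A has L_p-Lipschitz p-th derivatives), and set x^{t+1} = x^t − γ_t ∇A(x^{t+1/2}) with γ_t = ((M/(p−1)!)‖x^{t+1/2} − x^t‖^{p−1})^{-1}. Then ‖x^{t+1} − x^{k,*}‖² ≤ ‖x^t − x^{k,*}‖² − (1 − (L_p/(pM))²)‖x^t − x^{t+1/2}‖². -/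

import Mathlib

/-!
At `x_{t+1/2}` the gradient of the regularized model vanishes, so the gradient of the Taylor
polynomial there equals `-c w`, where `w = x_{t+1/2} - x_t` and `c = M/(p-1)! ‖w‖^{p-1} = γ⁻¹`.
The gradient of the Taylor polynomial of `A` is the Taylor polynomial of `∇A` (by symmetry of the
iterated derivatives), which approximates `∇A` up to `L‖w‖^p/p!` because `D^p A` is
`L`-Lipschitz. Hence `‖γ ∇A(x_{t+1/2}) + w‖ ≤ L/(pM) ‖w‖`, and expanding the square gives
`‖x_{t+1} - x*‖² = ‖x_t - x*‖² - ‖w‖² + ‖γ ∇A(x_{t+1/2}) + w‖² - 2γ⟪∇A(x_{t+1/2}), x_{t+1/2} - x*⟫`,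
where the last inner product is nonnegative by convexity.
-/

open Finset

/-- The `p`-th order Taylor polynomial of `A` at `z`, evaluated at `x`. -/
noncomputable def taylorApprox {d : ℕ} (p : ℕ) (A : EuclideanSpace ℝ (Fin d) → ℝ)
    (z x : EuclideanSpace ℝ (Fin d)) : ℝ :=
  ∑ i ∈ Finset.range (p + 1),
    (1 / (Nat.factorial i : ℝ)) * iteratedFDeriv ℝ i A z (fun _ => x - z)

open Function Nat

theorem Fin.cons_const {α : Type*} {n : ℕ} (a : α) :
    (Fin.cons a fun _ : Fin n => a : Fin (n + 1) → α) = fun _ => a :=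
  Fin.cons_self_tail (fun _ => a)

theorem Fin.update_const_zero {α : Type*} {n : ℕ} (w v : α) :
    update (fun _ : Fin (n + 1) => w) 0 v = Fin.cons v fun _ => w := by
  rw [← Fin.cons_const w, Fin.update_cons_zero]

theorem Fin.update_const_succ {α : Type*} {n : ℕ} (w v : α) (j : Fin n) :
    update (fun _ : Fin (n + 1) => w) j.succ v = Fin.cons w (update (fun _ => w) j v) := by
  rw [Fin.cons_update, Fin.cons_const]

section NormedSpace

variable {E F : Type*} [NormedAddCommGroup E] [NormedSpace ℝ E] [NormedAddCommGroup F]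
  [NormedSpace ℝ F]

theorem ContDiff.iteratedFDeriv_cons_cons_comm {n : ℕ} {f : E → F} (hf : ContDiff ℝ (n + 2) f)
    (x a b : E) (u : Fin n → E) :
    iteratedFDeriv ℝ (n + 2) f x (Fin.cons a (Fin.cons b u)) =
      iteratedFDeriv ℝ (n + 2) f x (Fin.cons b (Fin.cons a u)) := by
  set g := iteratedFDeriv ℝ n f
  have hg : ContDiff ℝ 2 g := hf.iteratedFDeriv_right (by simp [add_comm])
  have hsecond (a b : E) : iteratedFDeriv ℝ (n + 2) f x (Fin.cons a (Fin.cons b u)) =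
      fderiv ℝ (fderiv ℝ g) x a b u := by
    have hg' : HasFDerivAt (fderiv ℝ g) (fderiv ℝ (fderiv ℝ g) x) x :=
      ((hg.fderiv_right (m := 1) (by norm_num)).differentiable one_ne_zero x).hasFDerivAt
    rw [(hf.differentiable_iteratedFDeriv (by norm_cast; omega) x).iteratedFDeriv_succ_apply_left']
    simp only [Fin.cons_zero, Fin.tail_cons, iteratedFDeriv_succ_apply_left]
    rw [((hg'.clm_apply (hasFDerivAt_const b x)).continuousMultilinear_apply_const u).fderiv]
    simp
  rw [hsecond, hsecond, (hg.contDiffAt.isSymmSndFDerivAt (by simp)).eq]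

-- `ContDiffAt.iteratedFDeriv_comp_perm` needs analyticity; for `C^n` functions we only need
-- that one vector can be moved to the front, which reduces to swapping the first two slots.
theorem ContDiff.iteratedFDeriv_update_const {n : ℕ} {f : E → F} (hf : ContDiff ℝ (n + 1) f)
    (x w v : E) (j : Fin (n + 1)) :
    iteratedFDeriv ℝ (n + 1) f x (update (fun _ => w) j v) =
      iteratedFDeriv ℝ (n + 1) f x (Fin.cons v fun _ => w) := by
  induction n generalizing x with
  | zero => rw [Fin.fin_one_eq_zero j, Fin.update_const_zero]
  | succ m ih =>
    cases j using Fin.cases with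
    | zero => rw [Fin.update_const_zero]
    | succ j =>
      have hd := hf.differentiable_iteratedFDeriv (m := m + 1) (by norm_cast; omega) x
      have ih' := funext fun y => ih (hf.of_le (by norm_cast; omega)) y j
      have hcons := hd.iteratedFDeriv_succ_apply_left' (m := Fin.cons w (Fin.cons v fun _ => w))
      rw [Fin.update_const_succ, hd.iteratedFDeriv_succ_apply_left']
      simp only [Fin.cons_zero, Fin.tail_cons] at hcons ⊢
      rw [ih', ← hcons, hf.iteratedFDeriv_cons_cons_comm, Fin.cons_const]

theorem ContDiff.hasFDerivAt_iteratedFDeriv_apply_sub {k : ℕ} {f : E → F}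
    (hf : ContDiff ℝ (k + 1) f) (x₀ x : E) :
    HasFDerivAt (fun y => iteratedFDeriv ℝ (k + 1) f x₀ (fun _ => y - x₀))
      (((k : ℝ) + 1) • iteratedFDeriv ℝ k (fderiv ℝ f) x₀ (fun _ => x - x₀)) x := by
  refine (HasFDerivAt.multilinear_comp (iteratedFDeriv ℝ (k + 1) f x₀)
    (fun _ => (hasFDerivAt_id x).sub_const x₀)).congr_fderiv ?_
  ext v
  have hsymm (i : Fin (k + 1)) := (hf.iteratedFDeriv_update_const x₀ (x - x₀) v i).trans
    (hf.iteratedFDeriv_update_const x₀ (x - x₀) v (Fin.last k)).symm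
  simp [hsymm, iteratedFDeriv_succ_apply_right, ← Nat.cast_smul_eq_nsmul ℝ]
  rfl

theorem ContDiff.iteratedDeriv_comp_add_smul {n : ℕ} {f : E → F} (hf : ContDiff ℝ n f)
    (x y : E) (t : ℝ) :
    iteratedDeriv n (fun s => f (x + s • y)) t = iteratedFDeriv ℝ n f (x + t • y) (fun _ => y) := by
  induction n generalizing t with
  | zero => simp
  | succ n ih =>
    rw [iteratedDeriv_succ, funext (ih (hf.of_le (by norm_cast; omega))),
      hf.contDiffAt.deriv_fderiv_add_smul]

theorem norm_iteratedFDeriv_fderiv_sub {n : ℕ} {f : E → F} (x y : E) :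
    ‖iteratedFDeriv ℝ n (fderiv ℝ f) x - iteratedFDeriv ℝ n (fderiv ℝ f) y‖ =
      ‖iteratedFDeriv ℝ (n + 1) f x - iteratedFDeriv ℝ (n + 1) f y‖ := by
  rw [iteratedFDeriv_succ_eq_comp_right, iteratedFDeriv_succ_eq_comp_right, comp_apply,
    comp_apply, ← LinearIsometryEquiv.map_sub, LinearIsometryEquiv.norm_map]

theorem norm_sub_taylorWithinEval_le {n : ℕ} {ψ : ℝ → F} {K : ℝ} (hψ : ContDiff ℝ n ψ)
    (hLip : ∀ s t, ‖iteratedDeriv n ψ s - iteratedDeriv n ψ t‖ ≤ K * |s - t|) {t : ℝ}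
    (ht : 0 ≤ t) :
    ‖ψ t - taylorWithinEval ψ n Set.univ 0 t‖ ≤ K * t ^ (n + 1) / (n + 1)! := by
  induction n generalizing ψ t with
  | zero => simpa [taylor_within_zero_eval, abs_of_nonneg ht] using hLip t 0
  | succ n ih =>
    have hR (s : ℝ) : HasDerivAt (fun s => ψ s - taylorWithinEval ψ (n + 1) Set.univ 0 s)
        (deriv ψ s - taylorWithinEval (deriv ψ) n Set.univ 0 s) s := by
      have := ((hψ.differentiable (by simp)) s).hasDerivAt.sub
        (hasDerivAt_taylorWithinEval_succ ψ n (x₀ := 0) (s := Set.univ))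
      rwa [derivWithin_univ] at this
    have hB (s : ℝ) :
        HasDerivAt (fun s => K * s ^ (n + 2) / (n + 2)!) (K * s ^ (n + 1) / (n + 1)!) s := by
      refine (((hasDerivAt_pow (n + 2) s).const_mul K).div_const ((n + 2)! : ℝ)).congr_deriv ?_
      rw [Nat.factorial_succ (n + 1)]
      push_cast
      field_simp
      ring
    refine image_norm_le_of_norm_deriv_right_le_deriv_boundary (a := 0) (b := t)
      (fun s _ => (hR s).continuousAt.continuousWithinAt) (fun s _ => (hR s).hasDerivWithinAt)
      (by simp [taylorWithinEval_self]) hB (fun s hs => ih hψ.deriv' ?_ hs.1) ⟨ht, le_rfl⟩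
    simpa [← iteratedDeriv_succ'] using hLip

noncomputable def fTaylorEval (f : E → F) (n : ℕ) (x₀ x : E) : F :=
  ∑ i ∈ range (n + 1), (i ! : ℝ)⁻¹ • iteratedFDeriv ℝ i f x₀ (fun _ => x - x₀)

theorem ContDiff.hasFDerivAt_fTaylorEval_succ {n : ℕ} {f : E → F} (hf : ContDiff ℝ (n + 1) f)
    (x₀ x : E) :
    HasFDerivAt (fTaylorEval f (n + 1) x₀) (fTaylorEval (fderiv ℝ f) n x₀ x) x := by
  have hterm (i : ℕ) (hi : i ∈ range (n + 1)) :
      HasFDerivAt (fun y => ((i + 1)! : ℝ)⁻¹ • iteratedFDeriv ℝ (i + 1) f x₀ (fun _ => y - x₀))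
        ((i ! : ℝ)⁻¹ • iteratedFDeriv ℝ i (fderiv ℝ f) x₀ (fun _ => x - x₀)) x := by
    have hfi : ContDiff ℝ (i + 1) f := hf.of_le (by norm_cast; simpa using hi)
    refine ((hfi.hasFDerivAt_iteratedFDeriv_apply_sub x₀ x).const_smul
      ((i + 1)! : ℝ)⁻¹).congr_fderiv ?_
    rw [smul_smul, Nat.factorial_succ]
    push_cast
    field_simp
  unfold fTaylorEval
  simp_rw [sum_range_succ' _ (n + 1)]
  simpa using (HasFDerivAt.fun_sum hterm).add_const (f x₀)

theorem ContDiff.norm_sub_fTaylorEval_le {n : ℕ} {f : E → F} {L : ℝ} (hf : ContDiff ℝ n f)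
    (hLip : ∀ x y, ‖iteratedFDeriv ℝ n f x - iteratedFDeriv ℝ n f y‖ ≤ L * ‖x - y‖) (x₀ x : E) :
    ‖f x - fTaylorEval f n x₀ x‖ ≤ L * ‖x - x₀‖ ^ (n + 1) / (n + 1)! := by
  set u := x - x₀
  have hψ : ContDiff ℝ n (fun s : ℝ => f (x₀ + s • u)) := hf.comp (by fun_prop)
  have hψLip (s t : ℝ) :
      ‖iteratedDeriv n (fun s => f (x₀ + s • u)) s - iteratedDeriv n (fun s => f (x₀ + s • u)) t‖
        ≤ L * ‖u‖ ^ (n + 1) * |s - t| := by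
    rw [hf.iteratedDeriv_comp_add_smul, hf.iteratedDeriv_comp_add_smul, ← sub_apply]
    refine (ContinuousMultilinearMap.le_of_opNorm_le (hLip _ _) _).trans_eq ?_
    rw [add_sub_add_left_eq_sub, ← sub_smul, norm_smul, Real.norm_eq_abs]
    simp only [prod_const, Finset.card_univ, Fintype.card_fin]
    ring
  have hTaylor :
      taylorWithinEval (fun s => f (x₀ + s • u)) n Set.univ 0 1 = fTaylorEval f n x₀ x := by
    simp only [taylor_within_apply, iteratedDerivWithin_univ, fTaylorEval]
    refine sum_congr rfl fun i hi => ?_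
    rw [(hf.of_le (by norm_cast; simpa [Nat.lt_succ_iff] using hi)).iteratedDeriv_comp_add_smul]
    simp [u]
  have key := norm_sub_taylorWithinEval_le hψ hψLip zero_le_one
  rw [hTaylor] at key
  simpa [u] using key

theorem ConvexOn.hasFDerivAt_apply_sub_le {s : Set E} {f : E → ℝ} {f' : E →L[ℝ] ℝ} {x y : E}
    (hf : ConvexOn ℝ s f) (hx : x ∈ s) (hy : y ∈ s) (hf' : HasFDerivAt f f' x) :
    f' (y - x) ≤ f y - f x := by
  set g : ℝ →ᵃ[ℝ] E := AffineMap.lineMap x y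
  have hline : HasDerivAt (f ∘ g) (f' (y - x)) 0 :=
    (by simpa [g] using hf' : HasFDerivAt f f' (g 0)).comp_hasDerivAt 0
      AffineMap.hasDerivAt_lineMap
  simpa [slope, g] using (hf.comp_affineMap g).le_slope_of_hasDerivAt
    (by simpa [g] using hx) (by simpa [g] using hy) zero_lt_one hline

end NormedSpace

section InnerProductSpace

variable {H : Type*} [NormedAddCommGroup H] [InnerProductSpace ℝ H]

theorem hasFDerivAt_norm_sub_pow (k : ℕ) (z x : H) :
    HasFDerivAt (fun y => ‖y - z‖ ^ (k + 2))
      ((((k : ℝ) + 2) * ‖x - z‖ ^ k) • innerSL ℝ (x - z)) x := by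
  have h := (hasFDerivAt_norm_rpow (x - z) (p := k + 2) (by linarith [k.cast_nonneg (α := ℝ)])).comp
    x ((hasFDerivAt_id x).sub_const z)
  simp only [add_sub_cancel_right] at h
  exact_mod_cast h

theorem norm_sub_sub_sq_le {x y z v : H} (h : 0 ≤ inner ℝ v (y - z)) :
    ‖x - v - z‖ ^ 2 ≤ ‖x - z‖ ^ 2 - ‖x - y‖ ^ 2 + ‖v - (x - y)‖ ^ 2 := by
  rw [show y - z = (x - z) - (x - y) by abel, inner_sub_right] at h
  rw [show x - v - z = (x - z) - v by abel, norm_sub_sq_real (x - z), norm_sub_sq_real v,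
    real_inner_comm v]
  linarith

theorem norm_inv_smul_sub_le_of_norm_add_smul_le {k : ℕ} {L M : ℝ} (hM : 0 < M) {g x z : H}
    (h : ‖g + (M / k ! * ‖x - z‖ ^ k) • (x - z)‖ ≤ L * ‖x - z‖ ^ (k + 1) / (k + 1)!) :
    ‖(M / k ! * ‖x - z‖ ^ k)⁻¹ • g - (z - x)‖ ≤ L / ((k + 1) * M) * ‖z - x‖ := by
  rw [norm_sub_rev z]
  set r := ‖x - z‖
  rcases eq_or_ne r 0 with hr | hr
  · have hxz : x - z = 0 := norm_eq_zero.mp hr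
    simp_all [← neg_sub x z]
  have hc : 0 < M / k ! * r ^ k := by positivity
  have hdecomp : (M / k ! * r ^ k)⁻¹ • g - (z - x) =
      (M / k ! * r ^ k)⁻¹ • (g + (M / k ! * r ^ k) • (x - z)) := by
    rw [smul_add, smul_smul, inv_mul_cancel₀ hc.ne', one_smul, ← neg_sub x z, sub_neg_eq_add]
  rw [hdecomp, norm_smul, Real.norm_of_nonneg (inv_nonneg.mpr hc.le)]
  calc (M / k ! * r ^ k)⁻¹ * ‖g + (M / k ! * r ^ k) • (x - z)‖
      ≤ (M / k ! * r ^ k)⁻¹ * (L * r ^ (k + 1) / (k + 1)!) := by gcongr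
    _ = L / ((k + 1) * M) * r := by
      rw [Nat.factorial_succ]
      push_cast
      field_simp
      ring

variable [CompleteSpace H]

theorem ConvexOn.inner_gradient_sub_nonneg {s : Set H} {f : H → ℝ} {x xs : H}
    (hf : ConvexOn ℝ s f) (hx : x ∈ s) (hxs : xs ∈ s) (hd : DifferentiableAt ℝ f x)
    (hmin : IsMinOn f s xs) :
    0 ≤ inner ℝ (gradient f x) (x - xs) := by
  have hsupp := hf.hasFDerivAt_apply_sub_le hx hxs hd.hasFDerivAt
  rw [inner_gradient_left, ← neg_sub, map_neg]
  linarith [isMinOn_iff.mp hmin x hx]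

theorem norm_gradient_add_smul_le_of_isMinOn {k : ℕ} {f : H → ℝ} {L M : ℝ} {z x : H}
    (hf : ContDiff ℝ (k + 1) f)
    (hLip : ∀ x y, ‖iteratedFDeriv ℝ (k + 1) f x - iteratedFDeriv ℝ (k + 1) f y‖ ≤ L * ‖x - y‖)
    (hmin : IsMinOn (fun y => fTaylorEval f (k + 1) z y +
      ((k + 1) * M / (k + 2)! : ℝ) * ‖y - z‖ ^ (k + 2)) Set.univ x) :
    ‖gradient f x + (M / k ! * ‖x - z‖ ^ k) • (x - z)‖ ≤ L * ‖x - z‖ ^ (k + 1) / (k + 1)! := by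
  have hstat := (hmin.isLocalMin Filter.univ_mem).hasFDerivAt_eq_zero
    ((hf.hasFDerivAt_fTaylorEval_succ z x).add ((hasFDerivAt_norm_sub_pow k z x).const_mul _))
  have hcoef : ((k + 1) * M / (k + 2)! : ℝ) * (((k : ℝ) + 2) * ‖x - z‖ ^ k) =
      M / k ! * ‖x - z‖ ^ k := by
    rw [Nat.factorial_succ, Nat.factorial_succ]
    push_cast
    field_simp
    ring
  rw [smul_smul, hcoef, add_eq_zero_iff_eq_neg] at hstat
  have hrem := (hf.fderiv_right (m := k) (by norm_cast)).norm_sub_fTaylorEval_le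
    (fun x y => (norm_iteratedFDeriv_fderiv_sub x y).trans_le (hLip x y)) z x
  rw [hstat, sub_neg_eq_add] at hrem
  convert hrem using 1
  rw [← (InnerProductSpace.toDual ℝ H).norm_map, map_add, map_smul, toDual_gradient]
  rfl

end InnerProductSpace

theorem tensor_extragradient_one_step {d : ℕ} (p : ℕ) (hp : 2 ≤ p)
    (A : EuclideanSpace ℝ (Fin d) → ℝ)
    (hA : ContDiff ℝ (p : ℕ∞) A) (hconv : ConvexOn ℝ Set.univ A)
    (L M : ℝ) (hL : 0 < L)
    (hLip : ∀ x y : EuclideanSpace ℝ (Fin d),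
      ‖iteratedFDeriv ℝ p A x - iteratedFDeriv ℝ p A y‖ ≤ L * ‖x - y‖)
    (hM : L ≤ M)
    (xs : EuclideanSpace ℝ (Fin d)) (hmin : IsMinOn A Set.univ xs)
    (xt xhalf xnext : EuclideanSpace ℝ (Fin d))
    (hhalf : IsMinOn (fun x => taylorApprox p A xt x +
      ((p : ℝ) * M / (Nat.factorial (p + 1) : ℝ)) * ‖x - xt‖ ^ (p + 1)) Set.univ xhalf)
    (γ : ℝ) (hγ : γ = ((M / (Nat.factorial (p - 1) : ℝ)) * ‖xhalf - xt‖ ^ (p - 1))⁻¹)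
    (hnext : xnext = xt - γ • gradient A xhalf) :
    ‖xnext - xs‖ ^ 2 ≤
      ‖xt - xs‖ ^ 2 - (1 - (L / ((p : ℝ) * M)) ^ 2) * ‖xt - xhalf‖ ^ 2 := by
  obtain ⟨k, rfl⟩ : ∃ k, p = k + 1 := ⟨p - 1, by omega⟩
  rw [Nat.add_sub_cancel] at hγ
  have hM0 : 0 < M := hL.trans_le hM
  set g := gradient A xhalf
  have hTaylor : taylorApprox (k + 1) A xt = fTaylorEval A (k + 1) xt := by
    funext x; simp [taylorApprox, fTaylorEval]
  have herr : ‖g + (M / k ! * ‖xhalf - xt‖ ^ k) • (xhalf - xt)‖ ≤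
      L * ‖xhalf - xt‖ ^ (k + 1) / (k + 1)! :=
    norm_gradient_add_smul_le_of_isMinOn (by exact_mod_cast hA) hLip
      (by simpa [hTaylor, add_assoc] using hhalf)
  have hstep : ‖γ • g - (xt - xhalf)‖ ≤ L / ((k + 1) * M) * ‖xt - xhalf‖ :=
    hγ ▸ norm_inv_smul_sub_le_of_norm_add_smul_le hM0 herr
  have hmono : 0 ≤ inner ℝ (γ • g) (xhalf - xs) := by
    rw [real_inner_smul_left, hγ]
    exact mul_nonneg (by positivity) (hconv.inner_gradient_sub_nonneg (Set.mem_univ _)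
      (Set.mem_univ _) ((hA.differentiable (by simp)) xhalf) hmin)
  rw [hnext]
  calc ‖xt - γ • g - xs‖ ^ 2 ≤ ‖xt - xs‖ ^ 2 - ‖xt - xhalf‖ ^ 2 + ‖γ • g - (xt - xhalf)‖ ^ 2 :=
        norm_sub_sub_sq_le hmono
    _ ≤ ‖xt - xs‖ ^ 2 - ‖xt - xhalf‖ ^ 2 + (L / ((k + 1) * M) * ‖xt - xhalf‖) ^ 2 := by gcongr
    _ = _ := by push_cast; ring
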